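/- arXiv:math/9912246 — 4 statements merged into one kernel-verified Lean document; each statement's English description precedes it below -/
import Mathlib

section
/- An m-plane E ⊂ ℂᵐ is calibrated by φ₀ = Re(dz¹∧⋯∧dzᵐ) if and only if there exists A ∈ SU(m) with A(E) = ℝᵐ ⊂ ℂᵐ, where ℝᵐ is the standard real subspace; consequently every φ₀-calibrated m-plane is Lagrangian for ω₀. -/
open scoped ComplexConjugate

noncomputable section

/-- Real part of the Hermitian inner product on ℂᵐ (the Euclidean inner product). -/
def rInner {m : ℕ} (u v : Fin m → ℂ) : ℝ := (∑ k, conj (u k) * v k).re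

/-- The standard Kähler form `ω₀` : `ω₀(u,v) = Im ⟨u,v⟩`. -/
def omega0 {m : ℕ} (u v : Fin m → ℂ) : ℝ := (∑ k, conj (u k) * v k).im

/-- `Υ₀ = dz¹∧⋯∧dzᵐ` evaluated on `m` vectors. -/
def Upsilon0 {m : ℕ} (v : Fin m → (Fin m → ℂ)) : ℂ :=
  Matrix.det (Matrix.of fun k j => v j k)

/-- Unit volume form of the oriented plane with oriented ℝ-orthonormal basis `e`. -/
def OmegaE {m : ℕ} (e v : Fin m → (Fin m → ℂ)) : ℝ :=
  Matrix.det (Matrix.of fun i j => rInner (e i) (v j))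

/-- The standard real subspace `ℝᵐ ⊂ ℂᵐ` (real span of the standard basis vectors). -/
def realSubspace (m : ℕ) : Submodule ℝ (Fin m → ℂ) :=
  Submodule.span ℝ (Set.range fun k : Fin m => (Pi.single k 1 : Fin m → ℂ))

namespace HLaux
open Matrix
variable {m : ℕ}

lemma smul_term (r : ℝ) (a b : ℂ) : conj a * (r • b) = (r:ℂ) * (conj a * b) := by
  rw [Complex.real_smul]; ring

lemma smul_term' (r : ℝ) (a b : ℂ) : conj (r • a) * b = (r:ℂ) * (conj a * b) := by
  rw [Complex.real_smul, _root_.map_mul, Complex.conj_ofReal]; ring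

/-- rInner as a linear map in the second variable. -/
def rInnerL (u : Fin m → ℂ) : (Fin m → ℂ) →ₗ[ℝ] ℝ where
  toFun v := rInner u v
  map_add' v w := by
    simp only [rInner, Pi.add_apply, mul_add, Finset.sum_add_distrib, Complex.add_re]
  map_smul' r v := by
    simp only [rInner, Pi.smul_apply, RingHom.id_apply, smul_eq_mul, smul_term,
      ← Finset.mul_sum, Complex.re_ofReal_mul]

def omega0L (u : Fin m → ℂ) : (Fin m → ℂ) →ₗ[ℝ] ℝ where
  toFun v := omega0 u v
  map_add' v w := by
    simp only [omega0, Pi.add_apply, mul_add, Finset.sum_add_distrib, Complex.add_im]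
  map_smul' r v := by
    simp only [omega0, Pi.smul_apply, RingHom.id_apply, smul_eq_mul, smul_term,
      ← Finset.mul_sum, Complex.im_ofReal_mul]

lemma omega0_smul_left (r : ℝ) (u v : Fin m → ℂ) : omega0 (r • u) v = r * omega0 u v := by
  simp only [omega0, Pi.smul_apply, smul_term', ← Finset.mul_sum, Complex.im_ofReal_mul]

lemma omega0_add_left (u u' v : Fin m → ℂ) : omega0 (u + u') v = omega0 u v + omega0 u' v := by
  simp only [omega0, Pi.add_apply, map_add, add_mul, Finset.sum_add_distrib, Complex.add_im]

/-- Expansion of an element of the span in terms of the orthonormal basis. -/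
lemma span_expand (e : Fin m → (Fin m → ℂ))
    (hON : ∀ i j, rInner (e i) (e j) = if i = j then 1 else 0)
    {w : Fin m → ℂ} (hw : w ∈ Submodule.span ℝ (Set.range e)) :
    w = ∑ k, rInner (e k) w • e k := by
  have key : ∀ w ∈ Submodule.span ℝ (Set.range e),
      (∑ k, (rInnerL (e k) w) • e k) = w := by
    intro w hw
    induction hw using Submodule.span_induction with
    | mem x hx =>
      obtain ⟨i, rfl⟩ := hx
      calc (∑ k, (rInnerL (e k) (e i)) • e k)
          = ∑ k, (if k = i then (1:ℝ) else 0) • e k := by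
            refine Finset.sum_congr rfl fun k _ => ?_
            rw [show rInnerL (e k) (e i) = rInner (e k) (e i) from rfl, hON]
        _ = e i := by simp [ite_smul]
    | zero => simp
    | add x y _ _ hx hy =>
      simp only [map_add, add_smul, Finset.sum_add_distrib, hx, hy]
    | smul r x _ hx =>
      simp only [_root_.map_smul, smul_eq_mul, mul_smul, ← Finset.smul_sum, hx]
  exact (key w hw).symm


variable {m : ℕ}

lemma upsilon_expand (e : Fin m → (Fin m → ℂ))
    (hON : ∀ i j, rInner (e i) (e j) = if i = j then 1 else 0)
    (v : Fin m → (Fin m → ℂ)) (hv : ∀ j, v j ∈ Submodule.span ℝ (Set.range e)) :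
    Upsilon0 v = ((OmegaE e v : ℝ) : ℂ) * Upsilon0 e := by
  have hV : (Matrix.of fun k j => v j k) =
      (Matrix.of fun k j => e j k) * ((Matrix.of fun i j => rInner (e i) (v j)).map
        ⇑Complex.ofRealHom) := by
    ext k j
    simp only [Matrix.of_apply, Matrix.mul_apply]
    conv_lhs => rw [show v j = ∑ i, rInner (e i) (v j) • e i from span_expand e hON (hv j)]
    simp only [Matrix.of_apply, Finset.sum_apply, Pi.smul_apply, Matrix.map_apply,
      Complex.real_smul]
    exact Finset.sum_congr rfl fun i _ => mul_comm _ _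
  rw [Upsilon0, hV, Matrix.det_mul, ← RingHom.mapMatrix_apply, ← RingHom.map_det]
  rw [show Complex.ofRealHom ((Matrix.of fun i j => rInner (e i) (v j)).det) =
    ((OmegaE e v : ℝ) : ℂ) from rfl]
  rw [show Upsilon0 e = (Matrix.of fun k j => e j k).det from rfl]
  ring

lemma omegaE_basis (e : Fin m → (Fin m → ℂ))
    (hON : ∀ i j, rInner (e i) (e j) = if i = j then 1 else 0) : OmegaE e e = 1 := by
  have : (Matrix.of fun i j => rInner (e i) (e j)) = (1 : Matrix (Fin m) (Fin m) ℝ) := by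
    ext i j; rw [Matrix.of_apply, hON, Matrix.one_apply]
  rw [OmegaE, this, Matrix.det_one]

/-- Calibration (+) iff `Re Υ₀(e) = 1`. -/
lemma calib_iff (e : Fin m → (Fin m → ℂ))
    (hON : ∀ i j, rInner (e i) (e j) = if i = j then 1 else 0) :
    (∀ v : Fin m → (Fin m → ℂ), (∀ j, v j ∈ Submodule.span ℝ (Set.range e)) →
        (Upsilon0 v).re = OmegaE e v) ↔ (Upsilon0 e).re = 1 := by
  constructor
  · intro h
    have := h e (fun j => Submodule.subset_span (Set.mem_range_self j))
    rwa [omegaE_basis e hON] at this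
  · intro h v hv
    rw [upsilon_expand e hON v hv, Complex.re_ofReal_mul, h, mul_one]

lemma calib_iff_neg (e : Fin m → (Fin m → ℂ))
    (hON : ∀ i j, rInner (e i) (e j) = if i = j then 1 else 0) :
    (∀ v : Fin m → (Fin m → ℂ), (∀ j, v j ∈ Submodule.span ℝ (Set.range e)) →
        (Upsilon0 v).re = -(OmegaE e v)) ↔ (Upsilon0 e).re = -1 := by
  constructor
  · intro h
    have := h e (fun j => Submodule.subset_span (Set.mem_range_self j))
    rwa [omegaE_basis e hON] at this
  · intro h v hv
    rw [upsilon_expand e hON v hv, Complex.re_ofReal_mul, h]; ring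

variable {m : ℕ}

/-- AM–GM equality: nonneg reals with sum m and product ≥ 1 are all equal to 1. -/
lemma amgm_eq_one {l : Fin m → ℝ} (h0 : ∀ i, 0 ≤ l i) (hsum : ∑ i, l i = (m : ℝ))
    (hprod : 1 ≤ ∏ i, l i) : ∀ i, l i = 1 := by
  have hexp : ∀ i : Fin m, l i ≤ Real.exp (l i - 1) := fun i => by
    have := Real.add_one_le_exp (l i - 1); linarith
  have hprodexp : (∏ i, Real.exp (l i - 1)) = 1 := by
    rw [← Real.exp_sum]
    simp [Finset.sum_sub_distrib, hsum]
  have hle : ∏ i, l i ≤ 1 := by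
    rw [← hprodexp]
    exact Finset.prod_le_prod (fun i _ => h0 i) (fun i _ => hexp i)
  have hprodeq : ∏ i, l i = 1 := le_antisymm hle hprod
  have hpos : ∀ i, 0 < l i := by
    intro i
    rcases (h0 i).lt_or_eq with h | h
    · exact h
    · exfalso
      have : ∏ j, l j = 0 := Finset.prod_eq_zero (Finset.mem_univ i) h.symm
      rw [this] at hprodeq; norm_num at hprodeq
  by_contra hne
  push_neg at hne
  obtain ⟨i, hi⟩ := hne
  have hstrict : l i < Real.exp (l i - 1) := by
    have := Real.add_one_lt_exp (x := l i - 1) (by intro h; apply hi; linarith [h]) 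
    linarith
  have : ∏ j, l j < ∏ j, Real.exp (l j - 1) := by
    refine Finset.prod_lt_prod (fun j _ => hpos j) (fun j _ => hexp j) ?_
    exact ⟨i, Finset.mem_univ i, hstrict⟩
  rw [hprodeq, hprodexp] at this
  exact lt_irrefl _ this

/-- Key: if columns of M are rInner-orthonormal and `(det M).re = ±1`, then M is unitary
and `det M = ±1`. -/
lemma unitary_of_calibrated (M : Matrix (Fin m) (Fin m) ℂ)
    (hdiag : ∀ j, (Mᴴ * M) j j = 1)
    (hre : (M.det).re = 1 ∨ (M.det).re = -1) :
    Mᴴ * M = 1 ∧ (M.det = 1 ∨ M.det = -1) := by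
  set H := Mᴴ * M with hHdef
  have hHerm : H.IsHermitian := Matrix.isHermitian_conjTranspose_mul_self M
  set l := hHerm.eigenvalues with hl
  have h0 : ∀ i, 0 ≤ l i := fun i => Matrix.eigenvalues_conjTranspose_mul_self_nonneg M i
  -- trace
  have htraceC : H.trace = ∑ i, (l i : ℂ) := by
    conv_lhs => rw [hHerm.spectral_theorem, Unitary.conjStarAlgAut_apply]
    rw [Matrix.trace_mul_cycle]
    rw [show (star (hHerm.eigenvectorUnitary : Matrix (Fin m) (Fin m) ℂ)) *
        hHerm.eigenvectorUnitary = 1 from (Matrix.mem_unitaryGroup_iff').mp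
        hHerm.eigenvectorUnitary.2]
    simp [Matrix.trace, Matrix.diag, hl]
  have htrace : H.trace = (m : ℂ) := by
    rw [Matrix.trace,
      show (∑ i, H.diag i) = ∑ i : Fin m, (1:ℂ) from
        Finset.sum_congr rfl fun i _ => hdiag i]
    simp
  have hsum : ∑ i, l i = (m : ℝ) := by
    have : ((∑ i, l i : ℝ) : ℂ) = ((m:ℝ) : ℂ) := by
      push_cast
      rw [← htraceC, htrace]
    exact_mod_cast this
  -- determinant
  have hdetH : H.det = ((∏ i, l i : ℝ) : ℂ) := by
    rw [hHerm.det_eq_prod_eigenvalues]; push_cast; rfl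
  have hdetH' : H.det = (Complex.normSq M.det : ℂ) := by
    rw [hHdef, Matrix.det_mul, Matrix.det_conjTranspose]
    exact (Complex.normSq_eq_conj_mul_self).symm
  have hprodval : ∏ i, l i = Complex.normSq M.det := by
    have := hdetH.symm.trans hdetH'
    exact_mod_cast this
  have hre2 : (M.det).re ^ 2 = 1 := by rcases hre with h | h <;> rw [h] <;> norm_num
  have hprod_ge : 1 ≤ ∏ i, l i := by
    rw [hprodval, Complex.normSq_apply]
    nlinarith [sq_nonneg (M.det).im, hre2]
  have hall : ∀ i, l i = 1 := amgm_eq_one h0 hsum hprod_ge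
  -- H = 1
  have hH1 : H = 1 := by
    have hdiag1 : Matrix.diagonal (RCLike.ofReal ∘ l) = (1 : Matrix (Fin m) (Fin m) ℂ) := by
      ext i j
      by_cases h : i = j
      · subst h; simp [Matrix.diagonal_apply_eq, hall, Matrix.one_apply_eq]
      · simp [Matrix.diagonal_apply_ne _ h, Matrix.one_apply_ne h]
    conv_lhs => rw [hHerm.spectral_theorem, Unitary.conjStarAlgAut_apply]
    rw [hdiag1, mul_one]
    exact (Matrix.mem_unitaryGroup_iff).mp hHerm.eigenvectorUnitary.2
  refine ⟨hH1, ?_⟩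
  have hnorm1 : Complex.normSq M.det = 1 := by
    have : ∏ i, l i = 1 := by
      rw [Finset.prod_congr rfl fun i _ => hall i]; simp
    rw [← hprodval, this]
  have him : (M.det).im = 0 := by
    rw [Complex.normSq_apply] at hnorm1
    nlinarith [hre2]
  rcases hre with h | h
  · left; apply Complex.ext <;> simp [h, him]
  · right; apply Complex.ext <;> simp [h, him]


variable {m : ℕ}

lemma mulVecSingleOne (e : Fin m → (Fin m → ℂ)) (k : Fin m) :
    (Matrix.of fun k j => e j k).mulVec (Pi.single k 1) = e k := by
  funext i
  rw [Matrix.mulVec_single]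
  simp

lemma single_smul_real (k : Fin m) (r : ℝ) :
    (Pi.single k ((r:ℂ)) : Fin m → ℂ) = r • (Pi.single k 1 : Fin m → ℂ) := by
  funext j
  by_cases h : j = k
  · subst h; simp [Complex.real_smul]
  · simp [Pi.single_eq_of_ne h]

lemma map_span_eq_real (e : Fin m → (Fin m → ℂ)) (A : Matrix (Fin m) (Fin m) ℂ)
    (h : ∀ k, ∃ r : ℝ, r ≠ 0 ∧ A.mulVec (e k) = r • (Pi.single k 1 : Fin m → ℂ)) :
    Submodule.map ((Matrix.mulVecLin A).restrictScalars ℝ)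
      (Submodule.span ℝ (Set.range e)) = realSubspace m := by
  rw [Submodule.map_span, realSubspace]
  apply le_antisymm
  · rw [Submodule.span_le]
    rintro x ⟨y, ⟨k, rfl⟩, rfl⟩
    obtain ⟨r, _, hr⟩ := h k
    simp only [LinearMap.restrictScalars_apply, Matrix.mulVecLin_apply, hr]
    exact Submodule.smul_mem _ r (Submodule.subset_span ⟨k, rfl⟩)
  · rw [Submodule.span_le]
    rintro x ⟨k, rfl⟩
    obtain ⟨r, hr0, hr⟩ := h k
    have : (Pi.single k 1 : Fin m → ℂ) = r⁻¹ • ((Matrix.mulVecLin A).restrictScalars ℝ (e k)) := by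
      simp only [LinearMap.restrictScalars_apply, Matrix.mulVecLin_apply, hr, smul_smul,
        inv_mul_cancel₀ hr0, one_smul]
    show (Pi.single k 1 : Fin m → ℂ) ∈ _
    rw [this]
    exact Submodule.smul_mem _ _ (Submodule.subset_span ⟨e k, ⟨k, rfl⟩, rfl⟩)

/-- Construction of the SU(m) element from a unitary M with det ±1. -/
lemma construct_A (e : Fin m → (Fin m → ℂ))
    (hM1 : (Matrix.of fun k j => e j k)ᴴ * (Matrix.of fun k j => e j k) = 1)
    (hdet : (Matrix.of fun k j => e j k).det = 1 ∨ (Matrix.of fun k j => e j k).det = -1) :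
    ∃ A : Matrix (Fin m) (Fin m) ℂ, star A * A = 1 ∧ A.det = 1 ∧
      Submodule.map ((Matrix.mulVecLin A).restrictScalars ℝ)
        (Submodule.span ℝ (Set.range e)) = realSubspace m := by
  set M := (Matrix.of fun k j => e j k) with hMdef
  have hMMH : M * Mᴴ = 1 := by rwa [mul_eq_one_comm] at hM1
  have hstar : ∀ k, Mᴴ.mulVec (e k) = Pi.single k 1 := by
    intro k
    rw [← mulVecSingleOne e k, ← hMdef, Matrix.mulVec_mulVec, hM1, Matrix.one_mulVec]
  -- choose sign function
  rcases hdet with h1 | h1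
  · refine ⟨Mᴴ, ?_, ?_, ?_⟩
    · rw [Matrix.star_eq_conjTranspose, Matrix.conjTranspose_conjTranspose, hMMH]
    · rw [Matrix.det_conjTranspose, h1]; simp
    · exact map_span_eq_real e Mᴴ fun k => ⟨1, one_ne_zero, by rw [hstar k, one_smul]⟩
  · -- det M = -1 : use D * Mᴴ with D = diagonal flipping one sign
    have hm : m ≠ 0 := by
      rintro rfl
      rw [Matrix.det_isEmpty] at h1
      norm_num at h1
    obtain ⟨i0⟩ : Nonempty (Fin m) := ⟨⟨0, Nat.pos_of_ne_zero hm⟩⟩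
    set d : Fin m → ℂ := fun i => if i = i0 then -1 else 1 with hd
    set D := Matrix.diagonal d with hD
    have hDD : Dᴴ * D = 1 := by
      ext i j
      rw [hD, Matrix.diagonal_conjTranspose, Matrix.diagonal_mul_diagonal]
      by_cases h : i = j
      · subst h
        by_cases h2 : i = i0 <;>
          simp [Matrix.diagonal_apply_eq, Matrix.one_apply_eq, hd, h2]
      · simp [Matrix.diagonal_apply_ne _ h, Matrix.one_apply_ne h]
    refine ⟨D * Mᴴ, ?_, ?_, ?_⟩
    · calc star (D * Mᴴ) * (D * Mᴴ) = M * (Dᴴ * D) * Mᴴ := by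
            rw [Matrix.star_eq_conjTranspose, Matrix.conjTranspose_mul,
              Matrix.conjTranspose_conjTranspose]
            noncomm_ring
        _ = 1 := by rw [hDD, mul_one, hMMH]
    · rw [Matrix.det_mul, Matrix.det_conjTranspose, h1, hD, Matrix.det_diagonal, hd]
      rw [Finset.prod_ite_eq' Finset.univ i0 (fun _ => (-1 : ℂ))]
      simp
    · refine map_span_eq_real e (D * Mᴴ) fun k => ?_
      refine ⟨if k = i0 then -1 else 1, by by_cases h : k = i0 <;> simp [h], ?_⟩
      rw [← Matrix.mulVec_mulVec, hstar k, hD,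
        show (Pi.single k 1 : Fin m → ℂ) = Pi.single k (1:ℂ) from rfl,
        Matrix.diagonal_mulVec_single, mul_one]
      by_cases h : k = i0
      · subst h
        rw [show d k = ((((-1 : ℝ)):ℂ)) by simp [hd], single_smul_real]
        simp
      · rw [show d k = ((((1 : ℝ)):ℂ)) by simp [hd, h], single_smul_real]
        simp [h]

variable {m : ℕ}

lemma im_of_mem_realSubspace {w : Fin m → ℂ} (hw : w ∈ realSubspace m) :
    ∀ i, (w i).im = 0 := by
  induction hw using Submodule.span_induction with
  | mem x hx =>
    obtain ⟨k, rfl⟩ := hx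
    intro i
    by_cases h : i = k
    · subst h; simp
    · simp [Pi.single_eq_of_ne h]
  | zero => simp
  | add x y _ _ hx hy => intro i; simp [hx i, hy i]
  | smul r x _ hx =>
    intro i
    simp only [Pi.smul_apply, Complex.real_smul, Complex.mul_im, Complex.ofReal_re,
      Complex.ofReal_im, hx i]
    ring

lemma inner_invariant (A : Matrix (Fin m) (Fin m) ℂ) (hA : star A * A = 1)
    (u v : Fin m → ℂ) :
    ∑ i, conj ((A.mulVec u) i) * (A.mulVec v) i = ∑ i, conj (u i) * v i := by
  have h1 : dotProduct (star (A.mulVec u)) (A.mulVec v)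
      = dotProduct (star u) v := by
    rw [Matrix.star_mulVec, Matrix.dotProduct_mulVec, Matrix.vecMul_vecMul,
      show Aᴴ * A = 1 from hA, Matrix.vecMul_one]
  simpa [dotProduct, Pi.star_apply, RCLike.star_def] using h1

lemma converse_dir (e : Fin m → (Fin m → ℂ))
    (hON : ∀ i j, rInner (e i) (e j) = if i = j then 1 else 0)
    (A : Matrix (Fin m) (Fin m) ℂ) (hA : star A * A = 1) (hdet : A.det = 1)
    (hmap : Submodule.map ((Matrix.mulVecLin A).restrictScalars ℝ)
      (Submodule.span ℝ (Set.range e)) = realSubspace m) :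
    ((Matrix.of fun k j => e j k).det.re = 1 ∨ (Matrix.of fun k j => e j k).det.re = -1) := by
  set M := (Matrix.of fun k j => e j k) with hMdef
  set f : Fin m → (Fin m → ℂ) := fun k => A.mulVec (e k) with hf
  have hfmem : ∀ k, f k ∈ realSubspace m := by
    intro k
    rw [← hmap]
    exact ⟨e k, Submodule.subset_span ⟨k, rfl⟩, rfl⟩
  have him : ∀ k i, (f k i).im = 0 := fun k => im_of_mem_realSubspace (hfmem k)
  set R := A * M with hR
  have hRf : ∀ i k, R i k = f k i := by
    intro i k
    simp [hR, hf, hMdef, Matrix.of_apply, Matrix.mul_apply, Matrix.mulVec, dotProduct]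
  -- R has real entries
  set Rr : Matrix (Fin m) (Fin m) ℝ := Matrix.of fun i k => (R i k).re with hRr
  have hRmap : R = Rr.map ⇑Complex.ofRealHom := by
    ext i k
    apply Complex.ext
    · simp [hRr]
    · simp [hRr, hRf, him]
  have hdetR : R.det = ((Rr.det : ℝ) : ℂ) := by
    rw [hRmap, ← RingHom.mapMatrix_apply, ← RingHom.map_det]
    rfl
  -- R is unitary
  have hRstar : Rᴴ * R = 1 := by
    ext i j
    rw [Matrix.mul_apply]
    have : ∀ k, Rᴴ i k * R k j = conj (f i k) * f j k := by
      intro k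
      rw [Matrix.conjTranspose_apply, hRf, hRf, RCLike.star_def]
    rw [Finset.sum_congr rfl fun k _ => this k,
      show (∑ k, conj (f i k) * f j k) = ∑ k, conj ((A.mulVec (e i)) k) * (A.mulVec (e j)) k
        from rfl,
      inner_invariant A hA]
    apply Complex.ext
    · have : (∑ k, conj (e i k) * e j k).re = rInner (e i) (e j) := rfl
      rw [this, hON i j]
      by_cases h : i = j
      · subst h; simp [Matrix.one_apply_eq]
      · simp [h, Matrix.one_apply_ne h]
    · rw [show (∑ k, conj (e i k) * e j k) = ∑ k, conj (f i k) * f j k by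
        rw [show (∑ k, conj (f i k) * f j k) = ∑ k, conj ((A.mulVec (e i)) k) * (A.mulVec (e j)) k
          from rfl, inner_invariant A hA]]
      rw [Complex.im_sum]
      have : ∀ k, (conj (f i k) * f j k).im = 0 := by
        intro k
        rw [Complex.mul_im]
        simp [Complex.conj_im, Complex.conj_re, him i k, him j k]
      rw [Finset.sum_congr rfl fun k _ => this k, Finset.sum_const_zero]
      by_cases h : i = j
      · subst h; simp [Matrix.one_apply_eq]
      · simp [Matrix.one_apply_ne h]
  -- conclude det R = ±1
  have hdd : R.det * R.det = 1 := by
    have := congrArg Matrix.det hRstar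
    rw [Matrix.det_mul, Matrix.det_conjTranspose, Matrix.det_one, hdetR] at this
    simp only [RCLike.star_def, Complex.conj_ofReal] at this
    rw [hdetR]
    exact this
  have hdetM : M.det = R.det := by
    rw [hR, Matrix.det_mul, hdet, one_mul]
  rcases mul_self_eq_one_iff.mp hdd with h | h
  · left; rw [hdetM, h]; rfl
  · right; rw [hdetM, h]; rfl

lemma entry_eq (e : Fin m → (Fin m → ℂ)) (i j : Fin m) :
    ((Matrix.of fun k j => e j k)ᴴ * (Matrix.of fun k j => e j k)) i j
      = ∑ k, conj (e i k) * e j k := by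
  simp [Matrix.mul_apply, Matrix.conjTranspose_apply, RCLike.star_def, Matrix.of_apply]

lemma hdiag_of_ON (e : Fin m → (Fin m → ℂ))
    (hON : ∀ i j, rInner (e i) (e j) = if i = j then 1 else 0) (j : Fin m) :
    ((Matrix.of fun k j => e j k)ᴴ * (Matrix.of fun k j => e j k)) j j = 1 := by
  rw [entry_eq]
  apply Complex.ext
  · have : (∑ k, conj (e j k) * e j k).re = rInner (e j) (e j) := rfl
    rw [this, hON j j]; simp
  · rw [Complex.im_sum]
    have : ∀ k, (conj (e j k) * e j k).im = 0 := by
      intro k; rw [Complex.mul_im]; simp [Complex.conj_im, Complex.conj_re]; ring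
    rw [Finset.sum_congr rfl fun k _ => this k, Finset.sum_const_zero]; rfl

lemma omega0_basis_zero (e : Fin m → (Fin m → ℂ))
    (hM1 : (Matrix.of fun k j => e j k)ᴴ * (Matrix.of fun k j => e j k) = 1)
    (i j : Fin m) : omega0 (e i) (e j) = 0 := by
  have h := congrFun (congrFun hM1 i) j
  rw [entry_eq] at h
  have : omega0 (e i) (e j) = (∑ k, conj (e i k) * e j k).im := rfl
  rw [this, h]
  by_cases hij : i = j
  · subst hij; rw [Matrix.one_apply_eq]; rfl
  · rw [Matrix.one_apply_ne hij]; rfl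
end HLaux

open HLaux in
/-- Harvey–Lawson.  An `m`-plane `E ⊂ ℂᵐ` (presented by an ℝ-orthonormal
basis `e`; "calibrated by `φ₀ = Re Υ₀`" means `ι_E*(Re Υ₀)` equals the unit volume form
of `E` for one of its two orientations, i.e. `±Ω_E`) is calibrated by `φ₀` if and only
if there is `A ∈ SU(m)` (a complex unitary matrix of determinant one) with
`A(E) = ℝᵐ ⊂ ℂᵐ`.  Consequently every `φ₀`-calibrated `m`-plane is Lagrangian
for `ω₀`. -/
theorem special_lagrangian_iff_SU_moves_to_real {m : ℕ}
    (e : Fin m → (Fin m → ℂ))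
    (hON : ∀ i j, rInner (e i) (e j) = if i = j then 1 else 0) :
    (((∀ v : Fin m → (Fin m → ℂ), (∀ j, v j ∈ Submodule.span ℝ (Set.range e)) →
          (Upsilon0 v).re = OmegaE e v) ∨
      (∀ v : Fin m → (Fin m → ℂ), (∀ j, v j ∈ Submodule.span ℝ (Set.range e)) →
          (Upsilon0 v).re = -(OmegaE e v)))
      ↔ ∃ A : Matrix (Fin m) (Fin m) ℂ, star A * A = 1 ∧ A.det = 1 ∧
          Submodule.map ((Matrix.mulVecLin A).restrictScalars ℝ)
            (Submodule.span ℝ (Set.range e)) = realSubspace m) ∧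
    (((∀ v : Fin m → (Fin m → ℂ), (∀ j, v j ∈ Submodule.span ℝ (Set.range e)) →
          (Upsilon0 v).re = OmegaE e v) ∨
      (∀ v : Fin m → (Fin m → ℂ), (∀ j, v j ∈ Submodule.span ℝ (Set.range e)) →
          (Upsilon0 v).re = -(OmegaE e v)))
      → ∀ u v : Fin m → ℂ, u ∈ Submodule.span ℝ (Set.range e) →
          v ∈ Submodule.span ℝ (Set.range e) → omega0 u v = 0) := by
  classical
  set M := (Matrix.of fun k j => (e j) k) with hMdef
  have hcalib_iff : ((∀ v : Fin m → (Fin m → ℂ), (∀ j, v j ∈ Submodule.span ℝ (Set.range e)) →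
          (Upsilon0 v).re = OmegaE e v) ∨
      (∀ v : Fin m → (Fin m → ℂ), (∀ j, v j ∈ Submodule.span ℝ (Set.range e)) →
          (Upsilon0 v).re = -(OmegaE e v))) ↔ (M.det.re = 1 ∨ M.det.re = -1) := by
    constructor
    · rintro (h | h)
      · left; exact (calib_iff e hON).mp h
      · right; exact (calib_iff_neg e hON).mp h
    · rintro (h | h)
      · left; exact (calib_iff e hON).mpr h
      · right; exact (calib_iff_neg e hON).mpr h
  constructor
  · rw [hcalib_iff]
    constructor
    · intro hre
      obtain ⟨hM1, hdet⟩ := unitary_of_calibrated M (hdiag_of_ON e hON) hre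
      exact construct_A e hM1 hdet
    · rintro ⟨A, hA, hdetA, hmap⟩
      exact converse_dir e hON A hA hdetA hmap
  · intro hcal
    have hre := hcalib_iff.mp hcal
    obtain ⟨hM1, _⟩ := unitary_of_calibrated M (hdiag_of_ON e hON) hre
    intro u v hu hv
    have key : ∀ u ∈ Submodule.span ℝ (Set.range e), ∀ v ∈ Submodule.span ℝ (Set.range e),
        omega0 u v = 0 := by
      intro u hu
      induction hu using Submodule.span_induction with
      | mem x hx =>
        obtain ⟨i, rfl⟩ := hx
        intro v hv
        induction hv using Submodule.span_induction with
        | mem y hy =>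
          obtain ⟨j, rfl⟩ := hy
          exact omega0_basis_zero e hM1 i j
        | zero => simp [omega0]
        | add y z _ _ hy hz =>
          rw [show omega0 (e i) (y + z) = omega0L (e i) (y + z) from rfl, map_add]
          rw [show omega0L (e i) y = omega0 (e i) y from rfl,
            show omega0L (e i) z = omega0 (e i) z from rfl, hy, hz, add_zero]
        | smul r y _ hy =>
          rw [show omega0 (e i) (r • y) = omega0L (e i) (r • y) from rfl, LinearMap.map_smul,
            show omega0L (e i) y = omega0 (e i) y from rfl, hy, smul_zero]
      | zero => intro v hv; simp [omega0]
      | add x y _ _ hx hy =>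
        intro v hv
        rw [omega0_add_left, hx v hv, hy v hv, add_zero]
      | smul r x _ hx =>
        intro v hv
        rw [omega0_smul_left, hx v hv, mul_zero]
    exact key u hu v hv
end
end

section
/- Let T^m = ℝ^m/ℤ^m with coordinates xⁱ, and let h = (h^{ij}) be a positive-definite symmetric matrix of functions on T^m (m > 2) satisfying ∂h^{ij}/∂x^j = 0 for each i. Define g_{ij} via (g_{ij}) = det(h)^{1/(m−2)} h^{−1}. Then each coordinate 1-form dxⁱ is harmonic with respect to the Riemannian metric g = g_{ij} dxⁱ dxʲ. -/
open Matrix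

lemma key_identity (m : ℕ) (hm : 2 < m) (A : Matrix (Fin m) (Fin m) ℝ)
    (hpos : A.PosDef) (i j : Fin m) :
    Real.sqrt (((A.det ^ ((1 : ℝ) / ((m : ℝ) - 2))) • A⁻¹).det) *
      (((A.det ^ ((1 : ℝ) / ((m : ℝ) - 2))) • A⁻¹)⁻¹ i j) = A i j := by
  have hD : (0 : ℝ) < A.det := hpos.det_pos
  have hDne : A.det ≠ 0 := ne_of_gt hD
  set D := A.det with hDdef
  set c : ℝ := D ^ ((1 : ℝ) / ((m : ℝ) - 2)) with hc
  have hcpos : 0 < c := Real.rpow_pos_of_pos hD _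
  have hm2 : (0 : ℝ) < (m : ℝ) - 2 := by
    have : (2 : ℝ) < (m : ℝ) := by exact_mod_cast hm
    linarith
  -- inverse of c • A⁻¹
  have hinv : ((c • A⁻¹)⁻¹ : Matrix (Fin m) (Fin m) ℝ) = c⁻¹ • A := by
    apply Matrix.inv_eq_right_inv
    rw [Matrix.smul_mul, Matrix.mul_smul, smul_smul, mul_inv_cancel₀ (ne_of_gt hcpos),
      Matrix.nonsing_inv_mul A (isUnit_iff_ne_zero.mpr hDne), one_smul]
  -- determinant of c • A⁻¹
  have hdet : ((c • A⁻¹).det) = D ^ ((2 : ℝ) / ((m : ℝ) - 2)) := by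
    rw [Matrix.det_smul, Matrix.det_nonsing_inv]
    have h1 : c ^ (Fintype.card (Fin m)) = D ^ ((m : ℝ) / ((m : ℝ) - 2)) := by
      rw [Fintype.card_fin, hc, ← Real.rpow_natCast (D ^ ((1:ℝ)/((m:ℝ)-2))) m,
        ← Real.rpow_mul hD.le]
      congr 1
      field_simp
    rw [h1, Ring.inverse_eq_inv, ← Real.rpow_neg_one D, ← Real.rpow_add hD]
    congr 1
    field_simp
    ring
  have hsqrt : Real.sqrt ((c • A⁻¹).det) = c := by
    rw [hdet, Real.sqrt_eq_rpow, ← Real.rpow_mul hD.le, hc]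
    congr 1
    ring
  rw [hsqrt, hinv, Matrix.smul_apply, smul_eq_mul, ← mul_assoc,
    mul_inv_cancel₀ (ne_of_gt hcpos), one_mul]

/-- Let `T^m = ℝ^m/ℤ^m` (`m > 2`) and let `h = (h^{ij})` be a
positive-definite symmetric matrix of smooth functions on `T^m` (a ℤ^m-periodic matrix
function on ℝ^m) satisfying the divergence-free equations `∂h^{ij}/∂x^j = 0`.  Define
`(g_{ij}) = det(h)^{1/(m−2)}·h^{−1}`.  Then each coordinate 1-form `dxⁱ` is harmonic for
the metric `g = g_{ij}dxⁱdxʲ`: it is closed since it has constant coefficients, and the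
coclosedness condition `d*(dxⁱ) = 0` — which for the metric `g` reads
`∂/∂x^j(√(det g)·g^{ij}) = 0`, where `(g^{ij})` is the inverse matrix of `(g_{ij})` —
holds, which is the stated conclusion. -/
theorem coordinate_forms_harmonic
    (m : ℕ) (hm : 2 < m)
    (h : (Fin m → ℝ) → Matrix (Fin m) (Fin m) ℝ)
    (hsmooth : ∀ i j, ContDiff ℝ (⊤ : ℕ∞) fun x => h x i j)
    -- periodicity: h is a matrix of functions on the torus T^m = ℝ^m/ℤ^m
    (hper : ∀ (x : Fin m → ℝ) (k : Fin m), h (x + Pi.single k 1) = h x)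
    (hsymm : ∀ x, (h x)ᵀ = h x)
    (hpos : ∀ x, (h x).PosDef)
    -- the linear divergence-free equations ∂h^{ij}/∂x^j = 0
    (hdiv : ∀ (i : Fin m) (x : Fin m → ℝ),
      (∑ j, fderiv ℝ (fun y => h y i j) x (Pi.single j 1)) = 0) :
    ∀ (i : Fin m) (x : Fin m → ℝ),
      (∑ j, fderiv ℝ
        (fun y =>
          Real.sqrt ((((h y).det ^ ((1 : ℝ) / ((m : ℝ) - 2))) • (h y)⁻¹).det) *
            ((((h y).det ^ ((1 : ℝ) / ((m : ℝ) - 2))) • (h y)⁻¹)⁻¹ i j))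
        x (Pi.single j 1)) = 0 := by
  intro i x
  have hfun : ∀ j : Fin m, (fun y =>
      Real.sqrt ((((h y).det ^ ((1 : ℝ) / ((m : ℝ) - 2))) • (h y)⁻¹).det) *
        ((((h y).det ^ ((1 : ℝ) / ((m : ℝ) - 2))) • (h y)⁻¹)⁻¹ i j))
      = fun y => h y i j := by
    intro j
    funext y
    exact key_identity m hm (h y) (hpos y) i j
  calc (∑ j, fderiv ℝ
        (fun y =>
          Real.sqrt ((((h y).det ^ ((1 : ℝ) / ((m : ℝ) - 2))) • (h y)⁻¹).det) *
            ((((h y).det ^ ((1 : ℝ) / ((m : ℝ) - 2))) • (h y)⁻¹)⁻¹ i j))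
        x (Pi.single j 1))
      = ∑ j, fderiv ℝ (fun y => h y i j) x (Pi.single j 1) := by
        refine Finset.sum_congr rfl fun j _ => ?_
        rw [hfun j]
    _ = 0 := hdiv i x
end

section
/- Conversely, if g = g_{ij} dxⁱ dxʲ is a metric on T^m (m > 2) for which the coordinate 1-forms dxⁱ are all g-harmonic, then h = det(g)^{1/2}(g_{ij})^{−1} is a positive-definite symmetric matrix of functions satisfying the linear divergence-free equations ∂h^{ij}/∂x^j = 0; hence the space of such metrics corresponds to a convex open subset of a linear space of matrix-valued functions. -/
open Matrix

lemma posDef_smul {n : ℕ} {A : Matrix (Fin n) (Fin n) ℝ} (h : A.PosDef) {c : ℝ}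
    (hc : 0 < c) : (c • A).PosDef := by
  have ht : Aᵀ = A := by simpa using h.1.eq
  refine PosDef.of_dotProduct_mulVec_pos (by simp [Matrix.IsHermitian, conjTranspose_smul, ht]) fun x hx => ?_
  rw [smul_mulVec, dotProduct_smul, smul_eq_mul]
  exact mul_pos hc (h.dotProduct_mulVec_pos hx)

/-- Conversely, if `g = g_{ij}dxⁱdxʲ` is a (smooth, ℤ^m-periodic)
metric on `T^m = ℝ^m/ℤ^m` (`m > 2`) for which all the coordinate 1-forms `dxⁱ` are
`g`-harmonic — i.e. `∂_j(√(det g)·g^{ij}) = 0`, where `(g^{ij})` is the inverse matrix —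
then `h = det(g)^{1/2}·(g_{ij})^{−1}` is a positive-definite symmetric matrix of
functions satisfying the linear divergence-free equations `∂h^{ij}/∂x^j = 0`; and the
set of positive-definite (differentiable, symmetric) divergence-free matrix functions is
a convex subset of the linear space of matrix-valued functions. -/
theorem harmonic_metric_divergence_free
    (m : ℕ) (hm : 2 < m)
    (g : (Fin m → ℝ) → Matrix (Fin m) (Fin m) ℝ)
    (hsmooth : ∀ i j, ContDiff ℝ (⊤ : ℕ∞) fun x => g x i j)
    (hper : ∀ (x : Fin m → ℝ) (k : Fin m), g (x + Pi.single k 1) = g x)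
    (hsymm : ∀ x, (g x)ᵀ = g x)
    (hpos : ∀ x, (g x).PosDef)
    -- each dxⁱ is g-harmonic: d*(dxⁱ) = 0, i.e. ∂_j(√(det g) g^{ij}) = 0
    (hharm : ∀ (i : Fin m) (x : Fin m → ℝ),
      (∑ j, fderiv ℝ (fun y => Real.sqrt ((g y).det) * ((g y)⁻¹ i j)) x
        (Pi.single j 1)) = 0) :
    (∀ x, (Real.sqrt ((g x).det) • (g x)⁻¹).PosDef ∧
        (Real.sqrt ((g x).det) • (g x)⁻¹)ᵀ = Real.sqrt ((g x).det) • (g x)⁻¹) ∧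
    (∀ (i : Fin m) (x : Fin m → ℝ),
      (∑ j, fderiv ℝ (fun y => (Real.sqrt ((g y).det) • (g y)⁻¹) i j) x
        (Pi.single j 1)) = 0) ∧
    Convex ℝ {H : (Fin m → ℝ) → Matrix (Fin m) (Fin m) ℝ |
      (∀ i j, Differentiable ℝ fun x => H x i j) ∧
      ∀ x, (H x).PosDef ∧ (H x)ᵀ = H x ∧
        ∀ i, (∑ j, fderiv ℝ (fun y => H y i j) x (Pi.single j 1)) = 0} := by
  have hsq : ∀ x, 0 < Real.sqrt ((g x).det) := fun x =>
    Real.sqrt_pos.2 (hpos x).det_pos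
  refine ⟨fun x => ⟨posDef_smul (hpos x).inv (hsq x), ?_⟩, fun i x => ?_, ?_⟩
  · rw [transpose_smul, transpose_nonsing_inv, hsymm]
  · have h2 : ∀ j, (fun y => (Real.sqrt ((g y).det) • (g y)⁻¹) i j) =
        fun y => Real.sqrt ((g y).det) * ((g y)⁻¹ i j) := fun j => by
      funext y; simp [Matrix.smul_apply, smul_eq_mul]
    simp only [h2]
    exact hharm i x
  · rintro H ⟨hHd, hH⟩ K ⟨hKd, hK⟩ a b ha hb hab
    have heval : ∀ x i j, (a • H + b • K) x i j = a * H x i j + b * K x i j := by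
      intro x i j; simp [Matrix.add_apply, Matrix.smul_apply, smul_eq_mul]
    have hdiff : ∀ i j, Differentiable ℝ fun x => (a • H + b • K) x i j := by
      intro i j
      simp only [heval]
      exact ((hHd i j).const_mul a).add ((hKd i j).const_mul b)
    refine ⟨hdiff, fun x => ⟨?_, ?_, fun i => ?_⟩⟩
    · have : (a • H + b • K) x = a • H x + b • K x := rfl
      rw [this]
      rcases ha.eq_or_lt with h0 | h0
      · simp only [← h0, zero_add] at hab
        simp [← h0, hab, (hK x).1]
      rcases hb.eq_or_lt with h1 | h1
      · simp only [← h1, add_zero] at hab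
        simp [← h1, hab, (hH x).1]
      · exact (posDef_smul (hH x).1 h0).add (posDef_smul (hK x).1 h1)
    · have : (a • H + b • K) x = a • H x + b • K x := rfl
      rw [this, transpose_add, transpose_smul, transpose_smul, (hH x).2.1, (hK x).2.1]
    · calc (∑ j, fderiv ℝ (fun y => (a • H + b • K) y i j) x (Pi.single j 1))
          = ∑ j, (a * fderiv ℝ (fun y => H y i j) x (Pi.single j 1)
              + b * fderiv ℝ (fun y => K y i j) x (Pi.single j 1)) := by
            refine Finset.sum_congr rfl fun j _ => ?_
            have h1 : fderiv ℝ (fun y => (a • H + b • K) y i j) x =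
                a • fderiv ℝ (fun y => H y i j) x + b • fderiv ℝ (fun y => K y i j) x := by
              simp only [heval]
              rw [fderiv_fun_add (((hHd i j).const_mul a) x) (((hKd i j).const_mul b) x),
                fderiv_const_mul ((hHd i j) x), fderiv_const_mul ((hKd i j) x)]
            rw [h1]; rfl
          _ = 0 := by
            rw [Finset.sum_add_distrib, ← Finset.mul_sum, ← Finset.mul_sum,
              (hH x).2.2 i, (hK x).2.2 i]; ring
end

section
/- Let ω₀ = dx¹⁴+dx²⁵+dx³⁶ and Υ₀ = (dx¹+i dx⁴)∧(dx²+i dx⁵)∧(dx³+i dx⁶) on ℝ⁶, and for x ∈ M₆(ℝ) let x·α denote the induced action of gl(6,ℝ) on forms. Then the set 𝔥₃ = {x ∈ M₆(ℝ) : ι₃*(x·ω₀) = ι₃*(x·Υ₀) = 0}, where ι₃ : ℝ³ → ℝ⁶ is the inclusion onto the first three coordinates, is a linear subspace of dimension 31, cut out by the five linearly independent equations x⁴₂−x⁵₁ = x⁵₃−x⁶₂ = x⁶₁−x⁴₃ = x¹₁+x²₂+x³₃ = x⁴₁+x⁵₂+x⁶₃ = 0. -/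
noncomputable section

/-- `ω₀ = dx¹⁴ + dx²⁵ + dx³⁶` on ℝ⁶ (0-indexed coordinates). -/
def omega6 (u v : Fin 6 → ℝ) : ℝ :=
  (u 0 * v 3 - u 3 * v 0) + (u 1 * v 4 - u 4 * v 1) + (u 2 * v 5 - u 5 * v 2)

/-- The complex coordinate `zᵏ = xᵏ + i·x^{k+3}` on ℝ⁶ ≅ ℂ³. -/
def zc (k : Fin 3) (u : Fin 6 → ℝ) : ℂ :=
  (u (Fin.castLE (by norm_num) k) : ℂ) +
    Complex.I * (u ⟨(k : ℕ) + 3, by have := k.isLt; omega⟩ : ℝ)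

/-- `Υ₀ = (dx¹+i dx⁴) ∧ (dx²+i dx⁵) ∧ (dx³+i dx⁶)` evaluated on three vectors. -/
def Upsilon6 (u v w : Fin 6 → ℝ) : ℂ :=
  Matrix.det (Matrix.of fun k j => zc k (![u, v, w] j))

/-- The inclusion `ι₃ : ℝ³ → ℝ⁶` onto the first three coordinates. -/
def incl3 (v : Fin 3 → ℝ) : Fin 6 → ℝ :=
  fun i => if h : (i : ℕ) < 3 then v ⟨i, h⟩ else 0

/-- `ι₃*(x·ω₀) = 0`: the infinitesimal gl(6,ℝ)-action of `x` on `ω₀`, restricted to the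
coordinate ℝ³, vanishes (Leibniz rule over the slots; evaluated on vectors of ℝ³). -/
def annOmega (x : Matrix (Fin 6) (Fin 6) ℝ) : Prop :=
  ∀ a b : Fin 3 → ℝ,
    omega6 (x.mulVec (incl3 a)) (incl3 b) + omega6 (incl3 a) (x.mulVec (incl3 b)) = 0

/-- `ι₃*(x·Υ₀) = 0`. -/
def annUpsilon (x : Matrix (Fin 6) (Fin 6) ℝ) : Prop :=
  ∀ a b c : Fin 3 → ℝ,
    Upsilon6 (x.mulVec (incl3 a)) (incl3 b) (incl3 c)
      + Upsilon6 (incl3 a) (x.mulVec (incl3 b)) (incl3 c)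
      + Upsilon6 (incl3 a) (incl3 b) (x.mulVec (incl3 c)) = 0

/-! ### Auxiliary lemmas -/

lemma incl30 (a : Fin 3 → ℝ) : incl3 a 0 = a 0 := rfl
lemma incl31 (a : Fin 3 → ℝ) : incl3 a 1 = a 1 := rfl
lemma incl32 (a : Fin 3 → ℝ) : incl3 a 2 = a 2 := rfl
lemma incl33 (a : Fin 3 → ℝ) : incl3 a 3 = 0 := rfl
lemma incl34 (a : Fin 3 → ℝ) : incl3 a 4 = 0 := rfl
lemma incl35 (a : Fin 3 → ℝ) : incl3 a 5 = 0 := rfl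
lemma zc0 (u : Fin 6 → ℝ) : zc 0 u = (u 0 : ℂ) + Complex.I * (u 3 : ℝ) := rfl
lemma zc1 (u : Fin 6 → ℝ) : zc 1 u = (u 1 : ℂ) + Complex.I * (u 4 : ℝ) := rfl
lemma zc2 (u : Fin 6 → ℝ) : zc 2 u = (u 2 : ℂ) + Complex.I * (u 5 : ℝ) := rfl

/-- The five defining linear functionals, packaged as a linear map to `ℝ⁵`. -/
def fmap5 : Matrix (Fin 6) (Fin 6) ℝ →ₗ[ℝ] (Fin 5 → ℝ) where
  toFun x := ![x 3 1 - x 4 0, x 4 2 - x 5 1, x 5 0 - x 3 2,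
    x 0 0 + x 1 1 + x 2 2, x 3 0 + x 4 1 + x 5 2]
  map_add' x y := by funext i; fin_cases i <;> simp [Matrix.add_apply] <;> ring
  map_smul' r x := by funext i; fin_cases i <;> simp [Matrix.smul_apply] <;> ring

lemma fmap5_surj : Function.Surjective fmap5 := by
  intro v
  refine ⟨Matrix.of fun i j =>
    if i = 3 ∧ j = 1 then v 0 else if i = 4 ∧ j = 2 then v 1 else
    if i = 5 ∧ j = 0 then v 2 else if i = 0 ∧ j = 0 then v 3 else
    if i = 3 ∧ j = 0 then v 4 else 0, ?_⟩
  funext i; fin_cases i <;> simp [fmap5]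

lemma fmap5_ker_rank : Module.finrank ℝ (LinearMap.ker fmap5) = 31 := by
  have h := fmap5.finrank_range_add_finrank_ker
  rw [LinearMap.range_eq_top.mpr fmap5_surj] at h
  simp [Module.finrank_matrix] at h
  omega

lemma eqs_of_ann (x : Matrix (Fin 6) (Fin 6) ℝ) (hΩ : annOmega x) (hΥ : annUpsilon x) :
    x 3 1 = x 4 0 ∧ x 4 2 = x 5 1 ∧ x 5 0 = x 3 2 ∧
      x 0 0 + x 1 1 + x 2 2 = 0 ∧ x 3 0 + x 4 1 + x 5 2 = 0 := by
  have e01 := hΩ ![1,0,0] ![0,1,0]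
  have e12 := hΩ ![0,1,0] ![0,0,1]
  have e20 := hΩ ![0,0,1] ![1,0,0]
  simp only [omega6, Matrix.mulVec, dotProduct, Fin.sum_univ_six,
    incl30, incl31, incl32, incl33, incl34, incl35, Matrix.cons_val_zero, Matrix.cons_val_one,
    Matrix.head_cons, Matrix.cons_val_two, Matrix.tail_cons] at e01 e12 e20
  have e := hΥ ![1,0,0] ![0,1,0] ![0,0,1]
  simp only [Upsilon6, Matrix.det_fin_three, Matrix.of_apply, Matrix.cons_val',
    Matrix.cons_val_zero, Matrix.cons_val_one, Matrix.head_cons, Matrix.cons_val_two,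
    Matrix.tail_cons, Matrix.head_fin_const, Matrix.empty_val', Matrix.cons_val_fin_one,
    zc0, zc1, zc2, Matrix.mulVec, dotProduct, Fin.sum_univ_six,
    incl30, incl31, incl32, incl33, incl34, incl35] at e
  have hre := congrArg Complex.re e
  have him := congrArg Complex.im e
  push_cast at hre him
  simp [Complex.add_re, Complex.add_im, Complex.mul_re, Complex.mul_im] at hre him
  refine ⟨by linarith, by linarith, by linarith, ?_, ?_⟩ <;>
    ring_nf at hre him ⊢ <;> linarith

lemma ann_of_eqs (x : Matrix (Fin 6) (Fin 6) ℝ)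
    (h1 : x 3 1 = x 4 0) (h2 : x 4 2 = x 5 1) (h3 : x 5 0 = x 3 2)
    (h4 : x 0 0 + x 1 1 + x 2 2 = 0) (h5 : x 3 0 + x 4 1 + x 5 2 = 0) :
    annOmega x ∧ annUpsilon x := by
  constructor
  · intro a b
    simp only [omega6, Matrix.mulVec, dotProduct, Fin.sum_univ_six,
      incl30, incl31, incl32, incl33, incl34, incl35]
    linear_combination (a 0 * b 1 - a 1 * b 0) * h1 + (a 1 * b 2 - a 2 * b 1) * h2 +
      (a 2 * b 0 - a 0 * b 2) * h3
  · intro a b c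
    have h4c : ((x 0 0 : ℂ) + x 1 1 + x 2 2) = 0 := by
      exact_mod_cast congrArg (Complex.ofReal) h4
    have h5c : ((x 3 0 : ℂ) + x 4 1 + x 5 2) = 0 := by
      exact_mod_cast congrArg (Complex.ofReal) h5
    simp only [Upsilon6, Matrix.det_fin_three, Matrix.of_apply, Matrix.cons_val',
      Matrix.cons_val_zero, Matrix.cons_val_one, Matrix.head_cons, Matrix.cons_val_two,
      Matrix.tail_cons, Matrix.head_fin_const, Matrix.empty_val', Matrix.cons_val_fin_one,
      zc0, zc1, zc2, Matrix.mulVec, dotProduct, Fin.sum_univ_six,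
      incl30, incl31, incl32, incl33, incl34, incl35]
    push_cast
    linear_combination ((a 0 : ℂ) * (b 1 * c 2 - b 2 * c 1) - a 1 * (b 0 * c 2 - b 2 * c 0)
        + a 2 * (b 0 * c 1 - b 1 * c 0)) * (h4c + Complex.I * h5c)

/-- The space `𝔥₃ = {x ∈ M₆(ℝ) : ι₃*(x·ω₀) = ι₃*(x·Υ₀) = 0}` is cut out
by the five linearly independent equations
`x⁴₂ − x⁵₁ = x⁵₃ − x⁶₂ = x⁶₁ − x⁴₃ = x¹₁ + x²₂ + x³₃ = x⁴₁ + x⁵₂ + x⁶₃ = 0`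
(1-indexed; below 0-indexed), and is a linear subspace of dimension 31. -/
theorem h3_su3_dimension :
    ({x : Matrix (Fin 6) (Fin 6) ℝ | annOmega x ∧ annUpsilon x} =
      {x : Matrix (Fin 6) (Fin 6) ℝ |
        x 3 1 = x 4 0 ∧ x 4 2 = x 5 1 ∧ x 5 0 = x 3 2 ∧
        x 0 0 + x 1 1 + x 2 2 = 0 ∧ x 3 0 + x 4 1 + x 5 2 = 0}) ∧
    ∃ S : Submodule ℝ (Matrix (Fin 6) (Fin 6) ℝ),
      (S : Set (Matrix (Fin 6) (Fin 6) ℝ)) =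
        {x : Matrix (Fin 6) (Fin 6) ℝ | annOmega x ∧ annUpsilon x} ∧
      Module.finrank ℝ S = 31 := by
  have hset : ({x : Matrix (Fin 6) (Fin 6) ℝ | annOmega x ∧ annUpsilon x} =
      {x : Matrix (Fin 6) (Fin 6) ℝ |
        x 3 1 = x 4 0 ∧ x 4 2 = x 5 1 ∧ x 5 0 = x 3 2 ∧
        x 0 0 + x 1 1 + x 2 2 = 0 ∧ x 3 0 + x 4 1 + x 5 2 = 0}) := by
    ext x
    constructor
    · rintro ⟨hΩ, hΥ⟩
      exact eqs_of_ann x hΩ hΥ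
    · rintro ⟨h1, h2, h3, h4, h5⟩
      exact ann_of_eqs x h1 h2 h3 h4 h5
  refine ⟨hset, LinearMap.ker fmap5, ?_, fmap5_ker_rank⟩
  rw [hset]
  ext x
  simp only [SetLike.mem_coe, LinearMap.mem_ker, Set.mem_setOf_eq]
  constructor
  · intro h
    have h' : ∀ i, fmap5 x i = 0 := fun i => congrFun h i
    have h0 := h' 0; have h1 := h' 1; have h2 := h' 2; have h3 := h' 3; have h4 := h' 4
    simp [fmap5] at h0 h1 h2 h3 h4
    exact ⟨by linarith, by linarith, by linarith, h3, h4⟩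
  · rintro ⟨h1, h2, h3, h4, h5⟩
    funext i
    fin_cases i <;> simp [fmap5] <;> linarith
end
end
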